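/- arXiv:2406.15745 — 3 statements merged into one kernel-verified Lean document; each statement's English description precedes it below -/
import Mathlib

section
/- Let R be a ring with proper involution and let m be a positive integer. An element a ∈ R has an m-weak group inverse if and only if a^m has a weak group inverse. Moreover, if y is a weak group inverse of a^m, then a^(m-1) y is an m-weak group inverse of a; that is, a^{W_m} = a^(m-1) (a^m)^{W}. -/
/-- `z` is an `m`-weak group inverse of `a`. -/
def IsMWGI {R : Type*} [Ring R] [StarRing R] (m : ℕ) (a z : R) : Prop :=
  a * z ^ 2 = z ∧ ∃ k : ℕ, z * a ^ (k + 1) = a ^ k ∧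
    star (a ^ k) * a ^ (m + 1) * z = star (a ^ k) * a ^ m

/-- `w` is a weak group inverse of `b`. -/
def IsWGI {R : Type*} [Ring R] [StarRing R] (b w : R) : Prop :=
  b * w ^ 2 = w ∧ star (star b * b ^ 2 * w) = star b * b ^ 2 * w ∧
    ∃ k : ℕ, b ^ k = w * b ^ (k + 1)

/-- `x` is a group inverse of `u`. -/
def IsGroupInv {R : Type*} [Ring R] (u x : R) : Prop :=
  u * x ^ 2 = x ∧ u * x = x * u ∧ u = u ^ 2 * x

/-- `d` is a Drazin inverse of `a`. -/
def IsDrazin {R : Type*} [Ring R] (a d : R) : Prop :=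
  a * d ^ 2 = d ∧ a * d = d * a ∧ ∃ k : ℕ, a ^ k = d * a ^ (k + 1)

/-- `y` is a core-EP inverse of `a`. -/
def IsCoreEP {R : Type*} [Ring R] [StarRing R] (a y : R) : Prop :=
  a * y ^ 2 = y ∧ star (a * y) = a * y ∧ ∃ k : ℕ, a ^ k = y * a ^ (k + 1)

/-!
With `b = a ^ m`, the two constructions are `z ↦ z ^ m` and `y ↦ a ^ (m - 1) * y`; the
multiplicative conditions transfer by pushing powers through `a * z ^ 2 = z` and
`z * a ^ (k + 1) = a ^ k`. For the star conditions: `X = a ^ (m + 1) * z` factors as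
`a ^ (k + m + 1) * z ^ (k + 1)`, so `star (a ^ k) * X = star (a ^ k) * a ^ m` gives
`star X * X = star X * a ^ m`, hence `star (a ^ m) * X` is self-adjoint. Conversely,
self-adjointness of `star b * b ^ 2 * y` and `y * b ^ (k + 1) = b ^ k` turn
`star (b ^ (k + 2)) * b ^ 2 * y` into `star (b ^ (k + 2)) * b`.
-/

section Monoid

variable {R : Type*} [Monoid R]

theorem pow_mul_pow_add_succ_of_mul_sq {a z : R} (h : a * z ^ 2 = z) (n j : ℕ) :
    a ^ n * z ^ (n + j + 1) = z ^ (j + 1) := by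
  induction n with
  | zero => simp
  | succ n ih =>
    calc a ^ (n + 1) * z ^ (n + 1 + j + 1) = a ^ n * (a * z ^ 2 * z ^ (n + j)) := by
          rw [pow_succ, show n + 1 + j + 1 = 2 + (n + j) by omega, pow_add]
          simp only [mul_assoc]
      _ = a ^ n * z ^ (n + j + 1) := by rw [h, ← pow_succ']
      _ = z ^ (j + 1) := ih

theorem pow_mul_pow_succ_of_mul_sq {a z : R} (h : a * z ^ 2 = z) (n : ℕ) :
    a ^ n * z ^ (n + 1) = z := by
  simpa using pow_mul_pow_add_succ_of_mul_sq h n 0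

theorem mul_pow_succ_of_le {a z : R} {k n : ℕ} (h : z * a ^ (k + 1) = a ^ k) (hkn : k ≤ n) :
    z * a ^ (n + 1) = a ^ n := by
  obtain ⟨j, rfl⟩ := Nat.exists_eq_add_of_le hkn
  induction j with
  | zero => exact h
  | succ j ih =>
    rw [← add_assoc, pow_succ _ (k + j + 1), ← mul_assoc, ih (by omega), ← pow_succ]

theorem pow_mul_pow_add_of_le {a z : R} {k n : ℕ} (h : z * a ^ (k + 1) = a ^ k) (hkn : k ≤ n)
    (j : ℕ) : z ^ j * a ^ (n + j) = a ^ n := by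
  induction j with
  | zero => simp
  | succ j ih =>
    rw [pow_succ, mul_assoc, ← add_assoc, mul_pow_succ_of_le h (by omega), ih]

theorem pow_mul_mul_pow_of_mul_mul {c y z : R} (h : c * z * y = z) (n : ℕ) :
    c ^ n * z * y ^ n = z := by
  induction n with
  | zero => simp
  | succ n ih =>
    calc c ^ (n + 1) * z * y ^ (n + 1) = c ^ n * (c * z * y) * y ^ n := by
          rw [pow_succ, pow_succ']
          simp only [mul_assoc]
      _ = z := by rw [h, ih]

variable [StarMul R]

theorem isSelfAdjoint_star_mul_mul {p q u : R} (h : star p * (p * u) = star p * q) :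
    IsSelfAdjoint (star q * (p * u)) := by
  have hX : star (p * u) * q = star (p * u) * (p * u) := by
    rw [star_mul, mul_assoc, mul_assoc, h]
  have hq : star q * (p * u) = star (p * u) * (p * u) := by
    simpa only [star_mul, star_star] using congrArg star hX
  rw [IsSelfAdjoint, hq, star_mul, star_star]

theorem star_pow_mul_sq_mul_eq {b y : R} {k : ℕ} (hsa : IsSelfAdjoint (star b * (b ^ 2 * y)))
    (h : y * b ^ (k + 1) = b ^ k) :
    star (b ^ (k + 2)) * (b ^ 2 * y) = star (b ^ (k + 2)) * b :=
  calc star (b ^ (k + 2)) * (b ^ 2 * y) = star (b ^ (k + 1)) * star (star b * (b ^ 2 * y)) := by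
        rw [hsa.star_eq, pow_succ', star_mul, mul_assoc]
    _ = star (y * b ^ (k + 1)) * star (b ^ 2) * b := by
        simp only [star_mul, star_star, mul_assoc]
    _ = star (b ^ (k + 2)) * b := by
        rw [h, ← star_mul, ← pow_add, add_comm]

end Monoid

section Ring

variable {R : Type*} [Ring R] [StarRing R]

theorem IsMWGI.isWGI_pow {m : ℕ} {a z : R} (hz : IsMWGI m a z) : IsWGI (a ^ m) (z ^ m) := by
  obtain ⟨hsq, k, hk, hstar⟩ := hz
  cases m with
  | zero => simp [IsWGI]
  | succ s =>
    have hX : a ^ (s + 1 + 1) * z = a ^ (k + (s + 1 + 1)) * z ^ (k + 1) := by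
      rw [Nat.add_comm k, pow_add a (s + 1 + 1) k, mul_assoc, pow_mul_pow_succ_of_mul_sq hsq]
    refine ⟨?_, ?_, k, ?_⟩
    · rw [← pow_mul, show (s + 1) * 2 = s + 1 + s + 1 by ring, pow_mul_pow_add_succ_of_mul_sq hsq]
    · have hb : (a ^ (s + 1)) ^ 2 * z ^ (s + 1) = a ^ (s + 1 + 1) * z := by
        rw [← pow_mul, show (s + 1) * 2 = s + 1 + 1 + s by ring, pow_add, mul_assoc,
          pow_mul_pow_succ_of_mul_sq hsq]
      have hsa : IsSelfAdjoint (star (a ^ (s + 1)) * (a ^ (k + (s + 1 + 1)) * z ^ (k + 1))) := by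
        refine isSelfAdjoint_star_mul_mul ?_
        rw [← hX, pow_add a k, star_mul, mul_assoc, ← mul_assoc (star (a ^ k)), hstar, mul_assoc]
      rw [mul_assoc, hb, hX]
      exact hsa
    · rw [← pow_mul, ← pow_mul, mul_add, mul_one,
        pow_mul_pow_add_of_le hk (Nat.le_mul_of_pos_left k s.succ_pos)]

theorem IsWGI.isMWGI_pow_mul {s : ℕ} {a y : R} (hy : IsWGI (a ^ (s + 1)) y) :
    IsMWGI (s + 1) a (a ^ s * y) := by
  obtain ⟨hsq, hsa, k, hk⟩ := hy
  set b := a ^ (s + 1) with hb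
  replace hk : y * b ^ (k + 1) = b ^ k := hk.symm
  replace hsa : IsSelfAdjoint (star b * (b ^ 2 * y)) := by
    show star _ = _
    rw [← mul_assoc]
    exact hsa
  have hza : a * (a ^ s * y) = b * y := by rw [← mul_assoc, ← pow_succ']
  have hzy : b * (a ^ s * y) * y = a ^ s * y :=
    calc b * (a ^ s * y) * y = a ^ s * (b * y ^ 2) := by
          rw [← mul_assoc, hb, pow_mul_comm, sq]
          simp only [mul_assoc]
      _ = a ^ s * y := by rw [hsq]
  -- a multiple of `s + 1`, so that `a ^ ((s + 1) * (k + 2)) = b ^ (k + 2)` in the star condition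
  refine ⟨?_, (s + 1) * (k + 2), ?_, ?_⟩
  · calc a * (a ^ s * y) ^ 2 = b * y * (b ^ (k + 1) * (a ^ s * y) * y ^ (k + 1)) := by
          rw [sq, ← mul_assoc, hza, pow_mul_mul_pow_of_mul_mul hzy]
      _ = b * (y * b ^ (k + 1)) * (a ^ s * y) * y ^ (k + 1) := by simp only [mul_assoc]
      _ = b ^ (k + 1) * (a ^ s * y) * y ^ (k + 1) := by rw [hk, ← pow_succ']
      _ = a ^ s * y := pow_mul_mul_pow_of_mul_mul hzy _
  · refine mul_pow_succ_of_le (k := s + (s + 1) * k) ?_ (by nlinarith)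
    rw [show s + (s + 1) * k + 1 = (s + 1) * (k + 1) by ring, pow_mul, mul_assoc, hk, ← pow_mul,
      pow_add]
  · have hb2 : a ^ (s + 1 + 1) * (a ^ s * y) = b ^ 2 * y := by
      rw [← mul_assoc, ← pow_add, hb, ← pow_mul, show s + 1 + 1 + s = (s + 1) * 2 by ring]
    rw [pow_mul, mul_assoc, hb2, star_pow_mul_sq_mul_eq hsa hk]

end Ring

theorem mwgi_iff_pow_wgi_general {R : Type*} [Ring R] [StarRing R]
    (m : ℕ) (hm : 0 < m) (a : R) :
    ((∃ z : R, IsMWGI m a z) ↔ ∃ w : R, IsWGI (a ^ m) w) ∧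
      ∀ y : R, IsWGI (a ^ m) y → IsMWGI m a (a ^ (m - 1) * y) := by
  obtain ⟨s, rfl⟩ : ∃ s, m = s + 1 := ⟨m - 1, by omega⟩
  refine ⟨⟨fun ⟨z, hz⟩ => ⟨z ^ (s + 1), hz.isWGI_pow⟩, fun ⟨w, hw⟩ => ⟨_, hw.isMWGI_pow_mul⟩⟩,
    fun y hy => ?_⟩
  simpa using hy.isMWGI_pow_mul

theorem mwgi_iff_pow_wgi {R : Type*} [Ring R] [StarRing R]
    (hproper : ∀ x : R, star x * x = 0 → x = 0)
    (m : ℕ) (hm : 0 < m) (a : R) :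
    ((∃ z : R, IsMWGI m a z) ↔ ∃ w : R, IsWGI (a ^ m) w) ∧
      ∀ y : R, IsWGI (a ^ m) y → IsMWGI m a (a ^ (m - 1) * y) :=
  mwgi_iff_pow_wgi_general m hm a
end

section
/- Let R be a ring with proper involution, let x be a weak group inverse of a ∈ R and let y be a weak group inverse of b ∈ R. If a b = 0, b a = 0 and a^* b = 0, then a + b has a weak group inverse, and x + y is a weak group inverse of a + b. -/
/-!
If `x` is a weak group inverse of `a`, then `a * c = 0` already forces `x * c = 0`: the
self-adjoint element `star a * a ^ 2 * x` equals its adjoint, which ends in `a`, so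
`star a * a ^ 2 * x * c = 0`, hence
`a ^ 2 * x * c = 0` by properness, and `x = x ^ 2 * a ^ 2 * x`. So `x * b = 0` and `y * a = 0`;
with `a * b = b * a = 0` every mixed product vanishes, and `star a * b = 0` kills the mixed terms of
`star (a + b) * (a + b) ^ 2 * (x + y)`, so each defining condition for `a + b`, `x + y` splits
into the conditions for `a`, `x` and for `b`, `y`.
-/

section Monoid

variable {M : Type*} [Monoid M] {a x : M} {k : ℕ}

theorem pow_mul_pow_succ_eq_of_mul_sq_eq (h : a * x ^ 2 = x) (n : ℕ) :
    a ^ n * x ^ (n + 1) = x := by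
  induction n with
  | zero => simp
  | succ n ih =>
    calc a ^ (n + 1) * x ^ (n + 1 + 1) = a * (a ^ n * x ^ (n + 1)) * x := by
          rw [pow_succ' a, pow_succ x (n + 1)]; simp only [mul_assoc]
      _ = x := by rw [ih, mul_assoc, ← sq, h]

theorem pow_eq_mul_pow_succ_of_le (h : a ^ k = x * a ^ (k + 1)) {m : ℕ} (hkm : k ≤ m) :
    a ^ m = x * a ^ (m + 1) := by
  induction m, hkm using Nat.le_induction with
  | base => exact h
  | succ m _ ih => rw [pow_succ a m, ih, mul_assoc, ← pow_succ]

theorem mul_mul_eq_self_of_mul_sq_eq (h : a * x ^ 2 = x) (hk : a ^ k = x * a ^ (k + 1)) :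
    x * a * x = x :=
  calc x * a * x = x * a ^ (k + 1) * x ^ (k + 1) := by
        rw [mul_assoc, mul_assoc, pow_succ', mul_assoc, pow_mul_pow_succ_eq_of_mul_sq_eq h]
    _ = x := by rw [← hk, pow_mul_pow_succ_eq_of_mul_sq_eq h]

theorem mul_eq_mul_sq_mul_of_mul_sq_eq (h : a * x ^ 2 = x) (hk : a ^ k = x * a ^ (k + 1)) :
    a * x = x * a ^ 2 * x :=
  calc a * x = a ^ (k + 1) * x ^ (k + 1) := by
        rw [pow_succ', mul_assoc, pow_mul_pow_succ_eq_of_mul_sq_eq h]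
    _ = x * a ^ 2 * x := by
        rw [pow_eq_mul_pow_succ_of_le hk (m := k + 1) k.le_succ, add_assoc, add_comm, pow_add,
          ← mul_assoc, mul_assoc _ (a ^ k), pow_mul_pow_succ_eq_of_mul_sq_eq h,
          one_add_one_eq_two]

theorem sq_mul_sq_mul_eq_self_of_mul_sq_eq (h : a * x ^ 2 = x) (hk : a ^ k = x * a ^ (k + 1)) :
    x ^ 2 * a ^ 2 * x = x := by
  conv_rhs => rw [← mul_mul_eq_self_of_mul_sq_eq h hk, mul_assoc,
    mul_eq_mul_sq_mul_of_mul_sq_eq h hk]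
  simp only [sq, mul_assoc]

end Monoid

theorem mul_eq_zero_of_mul_sq_eq {M₀ : Type*} [MonoidWithZero M₀] {a b x : M₀}
    (h : a * x ^ 2 = x) (hba : b * a = 0) : b * x = 0 := by
  rw [← h, ← mul_assoc, hba, zero_mul]

theorem add_pow_succ_of_mul_eq_zero {R : Type*} [Semiring R] {a b : R}
    (hab : a * b = 0) (hba : b * a = 0) (n : ℕ) :
    (a + b) ^ (n + 1) = a ^ (n + 1) + b ^ (n + 1) := by
  induction n with
  | zero => simp
  | succ n ih =>
    rw [pow_succ _ (n + 1), ih, add_mul, mul_add, mul_add, pow_succ a n, mul_assoc _ a b, hab,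
      pow_succ b n, mul_assoc _ b a, hba, mul_zero, mul_zero, add_zero, zero_add,
      ← pow_succ, ← pow_succ, ← pow_succ, ← pow_succ]

theorem IsWGI.mul_eq_zero_of_mul_eq_zero {R : Type*} [Ring R] [StarRing R]
    (hproper : ∀ x : R, star x * x = 0 → x = 0) {a x c : R} (hx : IsWGI a x)
    (hac : a * c = 0) : x * c = 0 := by
  obtain ⟨hx1, hx2, k, hk⟩ := hx
  have h1 : star a * (a ^ 2 * (x * c)) = 0 := by
    rw [← mul_assoc, ← mul_assoc, ← hx2]
    simp only [star_mul, star_star, mul_assoc, hac, mul_zero]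
  have h2 : a ^ 2 * (x * c) = 0 := hproper _ <| by
    rw [star_mul, star_pow, sq, mul_assoc, mul_assoc, h1, mul_zero, mul_zero]
  rw [← sq_mul_sq_mul_eq_self_of_mul_sq_eq hx1 hk, mul_assoc, mul_assoc, h2, mul_zero]

theorem wgi_add {R : Type*} [Ring R] [StarRing R]
    (hproper : ∀ x : R, star x * x = 0 → x = 0)
    (a b x y : R) (hx : IsWGI a x) (hy : IsWGI b y)
    (hab : a * b = 0) (hba : b * a = 0) (hsab : star a * b = 0) :
    IsWGI (a + b) (x + y) := by
  have hsba : star b * a = 0 := by simpa using congrArg star hsab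
  have hxb := hx.mul_eq_zero_of_mul_eq_zero hproper hab
  have hya := hy.mul_eq_zero_of_mul_eq_zero hproper hba
  have hbx := mul_eq_zero_of_mul_sq_eq hx.1 hba
  have hay := mul_eq_zero_of_mul_sq_eq hy.1 hab
  have hxy := mul_eq_zero_of_mul_sq_eq hy.1 hxb
  have hyx := mul_eq_zero_of_mul_sq_eq hx.1 hya
  obtain ⟨hx1, hx2, k, hk⟩ := hx
  obtain ⟨hy1, hy2, l, hl⟩ := hy
  have hsq : (x + y) ^ 2 = x ^ 2 + y ^ 2 := add_pow_succ_of_mul_eq_zero hxy hyx 1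
  have hstar :
      star (a + b) * (a + b) ^ 2 * (x + y) = star a * a ^ 2 * x + star b * b ^ 2 * y := by
    rw [star_add, show (a + b) ^ 2 = a ^ 2 + b ^ 2 from add_pow_succ_of_mul_eq_zero hab hba 1]
    simp only [add_mul, mul_add, sq, ← mul_assoc, hsab, hsba, add_zero, zero_add]
    simp only [mul_assoc, hay, hbx, mul_zero, add_zero, zero_add]
  refine ⟨?_, by rw [hstar, star_add, hx2, hy2], k + l + 1, ?_⟩
  · rw [hsq, add_mul, mul_add, mul_add, hx1, hy1, sq y, ← mul_assoc a, hay, sq x,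
      ← mul_assoc b, hbx, zero_mul, zero_mul, add_zero, zero_add]
  · rw [add_pow_succ_of_mul_eq_zero hab hba, add_pow_succ_of_mul_eq_zero hab hba, mul_add,
      add_mul, add_mul, pow_succ' b (k + l + 1), pow_succ' a (k + l + 1), ← mul_assoc x b,
      ← mul_assoc y a, hxb, hya, zero_mul, zero_mul, add_zero, zero_add, ← pow_succ',
      ← pow_succ', ← pow_eq_mul_pow_succ_of_le hk (by omega),
      ← pow_eq_mul_pow_succ_of_le hl (by omega)]
end

section
/- Let R be a ring with proper involution, m a positive integer, let y be a core-EP inverse of a ∈ R, and let x = y^(m+1) a^m (which is an m-weak group inverse of a). Then the following are equivalent: (1) x = y; (2) a y = y^m a^m; (3) a x = a y. -/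
/-! The identities `a y² = y` and `aᵏ = y aᵏ⁺¹` of a core-EP inverse give `y a y = y` and
`a · y^(m+1) aᵐ = yᵐ aᵐ`. Hence `x = y` forces `a y = a x = yᵐ aᵐ`, and conversely
`a y = yᵐ aᵐ` gives `x = y · yᵐ aᵐ = y a y = y`. -/

section Monoid

variable {M : Type*} [Monoid M] {a y : M}

theorem mul_pow_add_two_of_mul_sq_eq (h : a * y ^ 2 = y) (n : ℕ) :
    a * y ^ (n + 2) = y ^ (n + 1) := by
  rw [Nat.add_comm n 2, pow_add, ← mul_assoc, h, ← pow_succ']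

theorem pow_mul_pow_succ_of_mul_sq_eq (h : a * y ^ 2 = y) (n : ℕ) :
    a ^ n * y ^ (n + 1) = y := by
  induction n with
  | zero => simp
  | succ n ih => rw [pow_succ, mul_assoc, mul_pow_add_two_of_mul_sq_eq h, ih]

theorem mul_mul_self_of_mul_sq_eq (h : a * y ^ 2 = y) {k : ℕ} (hk : a ^ k = y * a ^ (k + 1)) :
    y * a * y = y := by
  have hy := pow_mul_pow_succ_of_mul_sq_eq h k
  calc y * a * y = y * a * (a ^ k * y ^ (k + 1)) := by rw [hy]
    _ = y * a ^ (k + 1) * y ^ (k + 1) := by rw [pow_succ' a k]; simp only [mul_assoc]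
    _ = y := by rw [← hk, hy]

theorem pow_add_two_mul_pow_succ_eq_iff (h : a * y ^ 2 = y) (hyay : y * a * y = y) (n : ℕ) :
    y ^ (n + 2) * a ^ (n + 1) = y ↔ a * y = y ^ (n + 1) * a ^ (n + 1) := by
  have hax : a * (y ^ (n + 2) * a ^ (n + 1)) = y ^ (n + 1) * a ^ (n + 1) := by
    rw [← mul_assoc, mul_pow_add_two_of_mul_sq_eq h]
  constructor
  · intro hx
    rw [← hax, hx]
  · intro hay
    rw [pow_succ' y (n + 1), mul_assoc, ← hay, ← mul_assoc, hyay]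

end Monoid

theorem mwgi_eq_coreEP_tfae_general {R : Type*} [Ring R] [StarRing R]
    (m : ℕ) (hm : 0 < m) (a y x : R) (hy : IsCoreEP a y)
    (hx : x = y ^ (m + 1) * a ^ m) :
    (x = y ↔ a * y = y ^ m * a ^ m) ∧ (x = y ↔ a * x = a * y) := by
  obtain ⟨hsq, -, k, hk⟩ := hy
  obtain ⟨n, rfl⟩ := Nat.exists_eq_succ_of_ne_zero hm.ne'
  have key := pow_add_two_mul_pow_succ_eq_iff hsq (mul_mul_self_of_mul_sq_eq hsq hk) n
  have hax : a * x = y ^ (n + 1) * a ^ (n + 1) := by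
    rw [hx, ← mul_assoc, mul_pow_add_two_of_mul_sq_eq hsq]
  subst hx
  exact ⟨key, ⟨fun hxy => by rw [hxy], fun haxy => key.2 (haxy.symm.trans hax)⟩⟩

theorem mwgi_eq_coreEP_tfae {R : Type*} [Ring R] [StarRing R]
    (hproper : ∀ x : R, star x * x = 0 → x = 0)
    (m : ℕ) (hm : 0 < m) (a y x : R) (hy : IsCoreEP a y)
    (hx : x = y ^ (m + 1) * a ^ m) :
    (x = y ↔ a * y = y ^ m * a ^ m) ∧ (x = y ↔ a * x = a * y) :=
  mwgi_eq_coreEP_tfae_general m hm a y x hy hx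
end
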